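/- arXiv:1403.5024 — 2 statements merged into one kernel-verified Lean document; each statement's English description precedes it below -/
import Mathlib

section
/- Let σ : I¹ → I be a linear system, and for each k ≥ 1 let L_k denote the supremum of the lengths of the connected components of I^k. Then L_k → 0 as k → ∞. -/
noncomputable section

/-- Iterated preimages `I^k` for a map `σ` with domain pieces `I1 ⊆ I`:
`I⁰ = I`, `I^{k+1} = {x ∈ I¹ : σ x ∈ I^k}`. -/
def levIter (σ : ℝ → ℝ) (I1 I : Set ℝ) : ℕ → Set ℝ
  | 0 => I
  | k + 1 => {x | x ∈ I1 ∧ σ x ∈ levIter σ I1 I k}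

/-- A linear system `σ : I¹ → I` on finite collections of pairwise disjoint
bounded open intervals `I = I₁ ∪ ⋯ ∪ Iₙ` and `I¹ = I¹₁ ∪ ⋯ ∪ I¹ₘ`. -/
structure LinearSystem (n m : ℕ) where
  /-- the intervals of the range -/
  I : Fin n → Set ℝ
  /-- the intervals of the domain -/
  I1 : Fin m → Set ℝ
  /-- the map (extended arbitrarily outside `I¹`) -/
  σ : ℝ → ℝ
  hI : ∀ i, ∃ a b : ℝ, a < b ∧ I i = Set.Ioo a b
  hI1 : ∀ j, ∃ a b : ℝ, a < b ∧ I1 j = Set.Ioo a b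
  hdisj : Pairwise fun i i' => Disjoint (I i) (I i')
  hdisj1 : Pairwise fun j j' => Disjoint (I1 j) (I1 j')
  /-- each `I¹ⱼ` is contained in some `Iᵢ` -/
  hsub : ∀ j, ∃ i, I1 j ⊆ I i
  /-- `σ` restricted to each `I¹ⱼ` is an affine bijection onto some `Iᵢ` -/
  haff : ∀ j, ∃ i, ∃ a b : ℝ, a ≠ 0 ∧ (∀ x ∈ I1 j, σ x = a * x + b) ∧
    σ '' I1 j = I i
  /-- exactness: each endpoint of each `Iᵢ` is an endpoint of a component
  `I¹ⱼ ⊆ Iᵢ` -/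
  hexact : ∀ i, (∃ j, I1 j ⊆ I i ∧ sInf (I1 j) = sInf (I i)) ∧
    (∃ j, I1 j ⊆ I i ∧ sSup (I1 j) = sSup (I i))
  /-- mixing: some `I^N` meets every `Iᵢ` in a nonempty disconnected set -/
  hmix : ∃ N : ℕ, 1 ≤ N ∧ ∀ i,
    ((levIter σ (⋃ j, I1 j) (⋃ i, I i) N) ∩ I i).Nonempty ∧
    ¬ IsPreconnected ((levIter σ (⋃ j, I1 j) (⋃ i, I i) N) ∩ I i)

/-- The set `I^k` of a linear system. -/
def LinearSystem.lev {n m : ℕ} (L : LinearSystem n m) : ℕ → Set ℝ :=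
  levIter L.σ (⋃ j, L.I1 j) (⋃ i, L.I i)

/-- The Julia set `J_σ = ⋂_{k ≥ 1} I^k` of a linear system. -/
def LinearSystem.julia {n m : ℕ} (L : LinearSystem n m) : Set ℝ :=
  ⋂ k : ℕ, L.lev (k + 1)

end

/-- `maxCompLength L k` is the supremum `L_k` of the lengths of the connected
components of `I^k` (a component of `I^k` is a bounded interval, whose length
is `sSup C - sInf C`). -/
noncomputable def maxCompLength {n m : ℕ} (L : LinearSystem n m) (k : ℕ) : ℝ :=
  sSup {r : ℝ | ∃ x ∈ L.lev k,
    r = sSup (connectedComponentIn (L.lev k) x) -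
        sInf (connectedComponentIn (L.lev k) x)}

/-!
Write `I^k` as the disjoint union of the cylinders `C_w` of points whose orbit follows the
itinerary `w`, over the words `w` of length `k`. These are open, so every component of `I^k` lies in a single
cylinder. Since `σ` is affine on each `I¹ⱼ`, the proportion `ρᵢ(w)` of `Iᵢ` taken up by `C_w` is
submultiplicative: `ρᵢ(uw) ≤ ρᵢ(u) · maxᵢ' ρᵢ'(w)`. By mixing, a cylinder `C_u` with `|u| = N`
(an interval) cannot fill the disconnected set `I^N ∩ Iᵢ`, so a second, disjoint cylinder takes
up a positive part of `Iᵢ`; hence `ρᵢ(u) ≤ Λ < 1` for all such `u`, and the components of `I^k`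
have length at most `Λ^⌊k/N⌋ · ∑ᵢ |Iᵢ|`.
-/

open Set MeasureTheory Filter Topology

theorem IsPreconnected.subset_of_subset_biUnion {X ι : Type*} [TopologicalSpace X]
    {S : Set X} {s : Set ι} {U : ι → Set X} (hS : IsPreconnected S)
    (hU : ∀ i ∈ s, IsOpen (U i)) (hd : s.PairwiseDisjoint U) (hSU : S ⊆ ⋃ i ∈ s, U i)
    {i : ι} (hi : i ∈ s) (hSi : (S ∩ U i).Nonempty) : S ⊆ U i := by
  refine hS.subset_left_of_subset_union (hU i hi)
    (isOpen_biUnion fun j (hj : j ∈ s \ {i}) => hU j hj.1) ?_ ?_ hSi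
  · exact disjoint_iUnion₂_right.2 fun j hj => hd hi hj.1 (Ne.symm hj.2)
  · intro y hy
    obtain ⟨j, hj, hyj⟩ := mem_iUnion₂.1 (hSU hy)
    by_cases hji : j = i
    · exact Or.inl (hji ▸ hyj)
    · exact Or.inr (mem_iUnion₂.2 ⟨j, ⟨hj, hji⟩, hyj⟩)

theorem IsConnected.csSup_sub_csInf_le_measureReal {S T : Set ℝ} (hS : IsConnected S)
    (hST : S ⊆ T) (hT : Bornology.IsBounded T) : sSup S - sInf S ≤ volume.real T := by
  have hSb : Bornology.IsBounded S := hT.subset hST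
  calc sSup S - sInf S
      = volume.real (Ioo (sInf S) (sSup S)) :=
        (Real.volume_real_Ioo_of_le (csInf_le_csSup hS.nonempty hSb.bddBelow hSb.bddAbove)).symm
    _ ≤ volume.real T :=
        measureReal_mono ((hS.Ioo_csInf_csSup_subset hSb.bddBelow hSb.bddAbove).trans hST)
          hT.measure_lt_top.ne

theorem Real.volume_preimage_mul_add {a : ℝ} (ha : a ≠ 0) (b : ℝ) (s : Set ℝ) :
    volume ((fun x => a * x + b) ⁻¹' s) = ENNReal.ofReal |a⁻¹| * volume s := by
  change volume ((a * ·) ⁻¹' ((· + b) ⁻¹' s)) = _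
  rw [Real.volume_preimage_mul_left ha, measure_preimage_add_right]

theorem Convex.preimage_mul_add {s : Set ℝ} (hs : Convex ℝ s) (a b : ℝ) :
    Convex ℝ ((fun x => a * x + b) ⁻¹' s) :=
  (hs.translate_preimage_left b).smul_preimage a

namespace LinearSystem

variable {n m : ℕ} (L : LinearSystem n m)

theorem isOpen_I (i : Fin n) : IsOpen (L.I i) := by
  obtain ⟨a, b, -, h⟩ := L.hI i
  exact h ▸ isOpen_Ioo

theorem isBounded_I (i : Fin n) : Bornology.IsBounded (L.I i) := by
  obtain ⟨a, b, -, h⟩ := L.hI i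
  exact h ▸ Metric.isBounded_Ioo a b

/-- `L.cylinder w` is the set of points whose orbit follows the itinerary `w`:
`x ∈ I¹_{w₀}`, `σ x ∈ I¹_{w₁}`, …, and `σ^{|w|} x ∈ I`. -/
def cylinder : List (Fin m) → Set ℝ
  | [] => ⋃ i, L.I i
  | j :: w => {x | x ∈ L.I1 j ∧ L.σ x ∈ cylinder w}

theorem cylinder_nil : L.cylinder [] = ⋃ i, L.I i := rfl

/-- The index of the interval `Iᵢ` onto which `σ` maps `I¹ⱼ`. -/
noncomputable def target (j : Fin m) : Fin n := (L.haff j).choose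

theorem cylinder_cons_eq_preimage (j : Fin m) : ∃ a b : ℝ, a ≠ 0 ∧
    ∀ w, L.cylinder (j :: w) = (fun x => a * x + b) ⁻¹' (L.cylinder w ∩ L.I (L.target j)) := by
  obtain ⟨a, b, ha, hσ, himage⟩ := (L.haff j).choose_spec
  have hinj : Function.Injective fun x => a * x + b := fun x y hxy =>
    mul_left_cancel₀ ha (add_right_cancel hxy)
  have hI1 : L.I1 j = (fun x => a * x + b) ⁻¹' L.I (L.target j) := by
    rw [target, ← himage, image_congr hσ, hinj.preimage_image]
  refine ⟨a, b, ha, fun w => ext fun x => ?_⟩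
  show x ∈ L.I1 j ∧ L.σ x ∈ L.cylinder w ↔ _
  constructor
  · rintro ⟨hx, hσx⟩
    rw [hσ x hx] at hσx
    exact ⟨hσx, by rwa [hI1] at hx⟩
  · rintro ⟨hw, ht⟩
    have hx : x ∈ L.I1 j := hI1 ▸ ht
    exact ⟨hx, (hσ x hx).symm ▸ hw⟩

theorem cylinder_cons_subset (j : Fin m) (w : List (Fin m)) :
    L.cylinder (j :: w) ⊆ L.I1 j := fun _ hx => hx.1

theorem isOpen_cylinder : ∀ w, IsOpen (L.cylinder w)
  | [] => isOpen_iUnion L.isOpen_I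
  | j :: w => by
      obtain ⟨a, b, -, h⟩ := L.cylinder_cons_eq_preimage j
      obtain ⟨c, d, -, hI⟩ := L.hI (L.target j)
      rw [h, hI]
      exact ((isOpen_cylinder w).inter isOpen_Ioo).preimage (by fun_prop)

theorem convex_cylinder_cons (j : Fin m) (w : List (Fin m)) :
    Convex ℝ (L.cylinder (j :: w)) := by
  induction w generalizing j with
  | nil =>
    obtain ⟨a, b, -, h⟩ := L.cylinder_cons_eq_preimage j
    obtain ⟨c, d, -, hI⟩ := L.hI (L.target j)
    rw [h, cylinder_nil, inter_eq_right.2 (subset_iUnion L.I _), hI]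
    exact (convex_Ioo c d).preimage_mul_add a b
  | cons j' w ih =>
    obtain ⟨a, b, -, h⟩ := L.cylinder_cons_eq_preimage j
    obtain ⟨c, d, -, hI⟩ := L.hI (L.target j)
    rw [h, hI]
    exact ((ih j').inter (convex_Ioo c d)).preimage_mul_add a b

theorem disjoint_cylinder {u v : List (Fin m)} (hlen : u.length = v.length) (hne : u ≠ v) :
    Disjoint (L.cylinder u) (L.cylinder v) := by
  induction u generalizing v with
  | nil => exact absurd (List.length_eq_zero_iff.1 hlen.symm).symm hne
  | cons j u ih =>
    obtain _ | ⟨j', v⟩ := v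
    · simp at hlen
    by_cases hj : j = j'
    · subst hj
      have huv : Disjoint (L.cylinder u) (L.cylinder v) :=
        ih (by simpa using hlen) fun h => hne (h ▸ rfl)
      exact Disjoint.mono (fun _ hx => hx.2) (fun _ hx => hx.2) (huv.preimage L.σ)
    · exact (L.hdisj1 hj).mono (L.cylinder_cons_subset j u) (L.cylinder_cons_subset j' v)

theorem mem_lev_iff {k : ℕ} {x : ℝ} :
    x ∈ L.lev k ↔ ∃ w : List (Fin m), w.length = k ∧ x ∈ L.cylinder w := by
  induction k generalizing x with
  | zero => simp [lev, levIter, cylinder]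
  | succ k ih =>
    change (x ∈ ⋃ j, L.I1 j ∧ L.σ x ∈ L.lev k) ↔ _
    rw [ih, mem_iUnion]
    constructor
    · rintro ⟨⟨j, hj⟩, w, hw, hσx⟩
      exact ⟨j :: w, by simp [hw], hj, hσx⟩
    · rintro ⟨_ | ⟨j, w⟩, hw, hx⟩
      · simp at hw
      · exact ⟨⟨j, hx.1⟩, w, by simpa using hw, hx.2⟩

theorem lev_subset_iUnion (k : ℕ) : L.lev k ⊆ ⋃ i, L.I i := by
  cases k with
  | zero => exact subset_rfl
  | succ k =>
    rintro x ⟨hx, -⟩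
    obtain ⟨j, hj⟩ := mem_iUnion.1 hx
    obtain ⟨i, hi⟩ := L.hsub j
    exact mem_iUnion.2 ⟨i, hi hj⟩

theorem measureReal_I_pos (i : Fin n) : 0 < volume.real (L.I i) := by
  obtain ⟨a, b, hab, h⟩ := L.hI i
  rw [h, Real.volume_real_Ioo_of_le hab.le]
  linarith

theorem I1_subset_or_disjoint (j : Fin m) (i : Fin n) :
    L.I1 j ⊆ L.I i ∨ Disjoint (L.I1 j) (L.I i) := by
  obtain ⟨i', hi'⟩ := L.hsub j
  by_cases h : i' = i
  · exact Or.inl (h ▸ hi')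
  · exact Or.inr ((L.hdisj h).mono_left hi')

noncomputable def relMeasure (i : Fin n) (w : List (Fin m)) : ℝ :=
  volume.real (L.cylinder w ∩ L.I i) / volume.real (L.I i)

theorem relMeasure_nonneg (i : Fin n) (w : List (Fin m)) : 0 ≤ L.relMeasure i w :=
  div_nonneg measureReal_nonneg measureReal_nonneg

theorem relMeasure_le_one (i : Fin n) (w : List (Fin m)) : L.relMeasure i w ≤ 1 :=
  div_le_one_of_le₀ (measureReal_mono inter_subset_right (L.isBounded_I i).measure_lt_top.ne)
    measureReal_nonneg

theorem relMeasure_nil (i : Fin n) : L.relMeasure i [] = 1 := by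
  rw [relMeasure, cylinder_nil, inter_eq_right.2 (subset_iUnion L.I i)]
  exact div_self (L.measureReal_I_pos i).ne'

/-- Since `σ` is affine on `I¹ⱼ`, it scales all measures in `I¹ⱼ` by the same factor. -/
theorem relMeasure_cons (i : Fin n) (j : Fin m) (w : List (Fin m)) :
    L.relMeasure i (j :: w) = L.relMeasure i [j] * L.relMeasure (L.target j) w := by
  obtain ⟨a, b, ha, h⟩ := L.cylinder_cons_eq_preimage j
  set A : ℝ → ℝ := fun x => a * x + b
  set t := L.target j
  have hA (s : Set ℝ) : volume.real (A ⁻¹' s) = |a⁻¹| * volume.real s := by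
    simp only [Measure.real, A, Real.volume_preimage_mul_add ha, ENNReal.toReal_mul,
      ENNReal.toReal_ofReal (abs_nonneg _)]
  rcases L.I1_subset_or_disjoint j i with hsub | hdisj
  · have hcyl (v : List (Fin m)) : L.cylinder (j :: v) ∩ L.I i = L.cylinder (j :: v) :=
      inter_eq_left.2 ((L.cylinder_cons_subset j v).trans hsub)
    have ht := L.measureReal_I_pos t
    simp only [relMeasure, hcyl]
    rw [h, h, hA, hA, cylinder_nil, inter_eq_right.2 (subset_iUnion L.I t)]
    field_simp
  · have hzero (v : List (Fin m)) : L.relMeasure i (j :: v) = 0 := by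
      rw [relMeasure, (hdisj.mono_left (L.cylinder_cons_subset j v)).inter_eq, measureReal_empty,
        zero_div]
    rw [hzero, hzero, zero_mul]

theorem relMeasure_append_le {w : List (Fin m)} {c : ℝ} (hw : ∀ i, L.relMeasure i w ≤ c)
    (i : Fin n) (u : List (Fin m)) : L.relMeasure i (u ++ w) ≤ L.relMeasure i u * c := by
  induction u generalizing i with
  | nil => simpa [relMeasure_nil] using hw i
  | cons j u ih =>
    rw [List.cons_append, L.relMeasure_cons i j (u ++ w), L.relMeasure_cons i j u, mul_assoc]
    exact mul_le_mul_of_nonneg_left (ih _) (L.relMeasure_nonneg i [j])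

theorem relMeasure_le_pow {N : ℕ} {Λ : ℝ} (hΛ : 0 ≤ Λ)
    (hN : ∀ i u, u.length = N → L.relMeasure i u ≤ Λ) (q : ℕ) :
    ∀ i w, q * N ≤ w.length → L.relMeasure i w ≤ Λ ^ q := by
  induction q with
  | zero => simpa using L.relMeasure_le_one
  | succ q ih =>
    intro i w hw
    have hdrop : ∀ i', L.relMeasure i' (w.drop N) ≤ Λ ^ q := fun i' =>
      ih i' _ (by rw [List.length_drop]; lia)
    calc L.relMeasure i w
        = L.relMeasure i (w.take N ++ w.drop N) := by rw [List.take_append_drop]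
      _ ≤ L.relMeasure i (w.take N) * Λ ^ q := L.relMeasure_append_le hdrop i _
      _ ≤ Λ * Λ ^ q := by
        gcongr
        exact hN i _ (by rw [List.length_take]; lia)
      _ = Λ ^ (q + 1) := (pow_succ' Λ q).symm

/-- Mixing: a single cylinder of length `N` cannot fill `I^N ∩ Iᵢ`, so another, disjoint, open
cylinder takes up a positive part of `Iᵢ`. -/
theorem relMeasure_lt_one {N : ℕ} (i : Fin n) (hmix : ¬IsPreconnected (L.lev N ∩ L.I i))
    {u : List (Fin m)} (hu : u.length = N) (hne : u ≠ []) : L.relMeasure i u < 1 := by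
  obtain ⟨j, w, rfl⟩ := List.exists_cons_of_ne_nil hne
  have hsub : L.cylinder (j :: w) ∩ L.I i ⊆ L.lev N ∩ L.I i :=
    inter_subset_inter_left _ fun x hx => L.mem_lev_iff.2 ⟨_, hu, hx⟩
  obtain ⟨y, ⟨hyN, hyI⟩, hyu⟩ : ∃ y ∈ L.lev N ∩ L.I i, y ∉ L.cylinder (j :: w) := by
    by_contra! h
    obtain ⟨a, b, -, hI⟩ := L.hI i
    rw [(subset_inter h inter_subset_right).antisymm hsub, hI] at hmix
    exact hmix ((L.convex_cylinder_cons j w).inter (convex_Ioo a b)).isPreconnected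
  obtain ⟨v, hv, hyv⟩ := L.mem_lev_iff.1 hyN
  have hdisj : Disjoint (L.cylinder (j :: w) ∩ L.I i) (L.cylinder v ∩ L.I i) :=
    (L.disjoint_cylinder (hu.trans hv.symm) (by rintro rfl; exact hyu hyv)).mono
      inter_subset_left inter_subset_left
  have hfin (s : Set ℝ) : volume (s ∩ L.I i) ≠ ⊤ :=
    ((L.isBounded_I i).subset inter_subset_right).measure_lt_top.ne
  have hv_pos : 0 < volume.real (L.cylinder v ∩ L.I i) :=
    ENNReal.toReal_pos (((L.isOpen_cylinder v).inter (L.isOpen_I i)).measure_pos volume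
      ⟨y, hyv, hyI⟩).ne' (hfin _)
  have hsum : volume.real (L.cylinder (j :: w) ∩ L.I i) + volume.real (L.cylinder v ∩ L.I i)
      ≤ volume.real (L.I i) := by
    rw [← measureReal_union hdisj (((L.isOpen_cylinder v).inter (L.isOpen_I i)).measurableSet)
      (hfin _) (hfin _)]
    exact measureReal_mono (union_subset inter_subset_right inter_subset_right)
      (L.isBounded_I i).measure_lt_top.ne
  rw [relMeasure, div_lt_one (L.measureReal_I_pos i)]
  linarith

theorem exists_relMeasure_le : ∃ N Λ, 0 < N ∧ 0 ≤ Λ ∧ Λ < 1 ∧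
    ∀ i u, u.length = N → L.relMeasure i u ≤ Λ := by
  obtain ⟨N, hN, hmix⟩ := L.hmix
  have hlt (i : Fin n) (u : List (Fin m)) (hu : u ∈ {u : List (Fin m) | u.length = N}) :
      L.relMeasure i u < 1 :=
    L.relMeasure_lt_one i (hmix i).2 hu (by rintro rfl; simp at hu; lia)
  have hΛ01 : ∀ᶠ Λ in 𝓝[<] (1 : ℝ), Λ ∈ Ioo 0 1 := Ioo_mem_nhdsLT zero_lt_one
  have hbound : ∀ᶠ Λ in 𝓝[<] (1 : ℝ),
      ∀ i, ∀ u ∈ {u : List (Fin m) | u.length = N}, L.relMeasure i u ≤ Λ :=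
    eventually_all.2 fun i => (List.finite_length_eq (Fin m) N).eventually_all.2 fun u hu =>
      eventually_nhdsWithin_of_eventually_nhds (eventually_ge_nhds (hlt i u hu))
  obtain ⟨Λ, ⟨hΛ0, hΛ1⟩, hΛ⟩ := (hΛ01.and hbound).exists
  exact ⟨N, Λ, hN, hΛ0.le, hΛ1, fun i u hu => hΛ i u hu⟩

theorem exists_connectedComponentIn_lev_subset {k : ℕ} {x : ℝ} (hx : x ∈ L.lev k) :
    ∃ w i, w.length = k ∧ connectedComponentIn (L.lev k) x ⊆ L.cylinder w ∩ L.I i := by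
  obtain ⟨w, hw, hxw⟩ := L.mem_lev_iff.1 hx
  obtain ⟨i, hxi⟩ := mem_iUnion.1 (L.lev_subset_iUnion k hx)
  have hC := (isConnected_connectedComponentIn_iff.2 hx).isPreconnected
  have hxC := mem_connectedComponentIn hx
  have hCk := connectedComponentIn_subset (L.lev k) x
  refine ⟨w, i, hw, subset_inter ?_ ?_⟩
  · refine hC.subset_of_subset_biUnion (s := {v : List (Fin m) | v.length = k})
      (fun v _ => L.isOpen_cylinder v)
      (fun u hu v hv huv => L.disjoint_cylinder (hu.trans hv.symm) huv)
      (fun y hy => by simpa using L.mem_lev_iff.1 (hCk hy)) hw ⟨x, hxC, hxw⟩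
  · refine hC.subset_of_subset_biUnion (s := univ) (fun i _ => L.isOpen_I i)
      (fun i _ i' _ hii' => L.hdisj hii') ?_ (mem_univ i) ⟨x, hxC, hxi⟩
    simpa using hCk.trans (L.lev_subset_iUnion k)

theorem maxCompLength_nonneg (k : ℕ) : 0 ≤ maxCompLength L k := by
  refine Real.sSup_nonneg ?_
  rintro r ⟨x, hx, rfl⟩
  obtain ⟨w, i, -, hC⟩ := L.exists_connectedComponentIn_lev_subset hx
  have hb := (L.isBounded_I i).subset (hC.trans inter_subset_right)
  exact sub_nonneg.2 (csInf_le_csSup (isConnected_connectedComponentIn_iff.2 hx).nonempty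
    hb.bddBelow hb.bddAbove)

theorem maxCompLength_le {N : ℕ} {Λ : ℝ} (hΛ : 0 ≤ Λ)
    (hN : ∀ i u, u.length = N → L.relMeasure i u ≤ Λ) (k : ℕ) :
    maxCompLength L k ≤ Λ ^ (k / N) * ∑ i, volume.real (L.I i) := by
  refine Real.sSup_le ?_ (by positivity)
  rintro r ⟨x, hx, rfl⟩
  obtain ⟨w, i, hw, hC⟩ := L.exists_connectedComponentIn_lev_subset hx
  calc _ ≤ volume.real (L.cylinder w ∩ L.I i) :=
        (isConnected_connectedComponentIn_iff.2 hx).csSup_sub_csInf_le_measureReal hC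
          ((L.isBounded_I i).subset inter_subset_right)
    _ = L.relMeasure i w * volume.real (L.I i) :=
        (div_mul_cancel₀ _ (L.measureReal_I_pos i).ne').symm
    _ ≤ Λ ^ (k / N) * ∑ i, volume.real (L.I i) := by
        gcongr
        · exact L.relMeasure_le_pow hΛ hN _ i w (hw ▸ Nat.div_mul_le_self k N)
        · exact Finset.single_le_sum (fun i _ => measureReal_nonneg) (Finset.mem_univ i)

end LinearSystem

theorem linearSystem_component_lengths_tendsto_zero {n m : ℕ}
    (L : LinearSystem n m) :
    Filter.Tendsto (maxCompLength L) Filter.atTop (nhds 0) := by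
  obtain ⟨N, Λ, hN, hΛ0, hΛ1, hΛ⟩ := L.exists_relMeasure_le
  have hlim : Tendsto (fun k => Λ ^ (k / N) * ∑ i, volume.real (L.I i)) atTop (𝓝 0) := by
    simpa using ((tendsto_pow_atTop_nhds_zero_of_lt_one hΛ0 hΛ1).comp
      (Nat.tendsto_div_const_atTop hN.ne')).mul_const _
  exact tendsto_of_tendsto_of_tendsto_of_le_of_le tendsto_const_nhds hlim
    L.maxCompLength_nonneg (L.maxCompLength_le hΛ0 hΛ)
end

section
/- Let X be a nonempty compact, locally connected metric space. Let (φ_n) be a sequence of homeomorphisms of X onto itself converging uniformly to a map h : X → X. Then h is a continuous surjection, and for every closed connected subset E ⊆ X the preimage h^{-1}(E) is a closed connected subset of X. -/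
/-!
Continuity and surjectivity pass to the uniform limit because `X` is compact. For the
connectedness of `h ⁻¹' E` it suffices, `X` being normal, that every open `W ⊇ h ⁻¹' E` contains
a preconnected set containing `h ⁻¹' E`. By compactness `h ⁻¹' thickening δ E ⊆ W` for some `δ`;
the component of `thickening (δ / 2) E` containing `E` is open by local connectedness, hence
contains some `thickening δ' E`; and once `φ n` is uniformly within `min δ' (δ / 2)` of `h`, the
preimage of that component under `φ n` is squeezed between `h ⁻¹' E` and `W`.
-/

open Metric Set Function

theorem TendstoUniformly.surjective {ι α β : Type*} [TopologicalSpace α] [CompactSpace α]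
    [UniformSpace β] [T2Space β] {F : ι → α → β} {f : α → β} {p : Filter ι} [p.NeBot]
    (hF : TendstoUniformly F f p) (hFs : ∀ᶠ i in p, Surjective (F i)) (hf : Continuous f) :
    Surjective f := by
  intro y
  suffices y ∈ closure (range f) by rwa [(isCompact_range hf).isClosed.closure_eq] at this
  refine UniformSpace.mem_closure_iff_symm_ball.2 fun {V} hV _ => ?_
  obtain ⟨i, hi, hFi⟩ := ((hF V hV).and hFs).exists
  obtain ⟨x, rfl⟩ := hFi y
  exact ⟨f x, mem_range_self x, SetRel.symm V (hi x)⟩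

theorem IsClosed.isPreconnected_of_forall_isOpen_superset {X : Type*} [TopologicalSpace X]
    [NormalSpace X] {P : Set X} (hP : IsClosed P)
    (hsqueeze : ∀ W, IsOpen W → P ⊆ W → ∃ C, IsPreconnected C ∧ P ⊆ C ∧ C ⊆ W) :
    IsPreconnected P := by
  refine isPreconnected_iff_subset_of_disjoint_closed.2 fun u v hu hv hPuv hPuv' => ?_
  have hdisj : Disjoint (P ∩ u) (P ∩ v) := by
    rw [disjoint_iff_inter_eq_empty, inter_inter_inter_comm, inter_self, hPuv']
  obtain ⟨U, V, hU, hV, hPU, hPV, hUV⟩ := normal_separation (hP.inter hu) (hP.inter hv) hdisj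
  have hPUV : P ⊆ U ∪ V := fun x hx =>
    (hPuv hx).imp (fun hxu => hPU ⟨hx, hxu⟩) (fun hxv => hPV ⟨hx, hxv⟩)
  obtain ⟨C, hC, hPC, hCUV⟩ := hsqueeze _ (hU.union hV) hPUV
  refine (hC.subset_or_subset hU hV hUV hCUV).imp (fun hCU x hx => ?_) (fun hCV x hx => ?_)
  · exact (hPuv hx).resolve_right fun hxv => hUV.ne_of_mem (hCU (hPC hx)) (hPV ⟨hx, hxv⟩) rfl
  · exact (hPuv hx).resolve_left fun hxu => hUV.ne_of_mem (hPU ⟨hx, hxu⟩) (hCV (hPC hx)) rfl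

theorem Continuous.exists_preimage_thickening_subset {X Y : Type*} [TopologicalSpace X]
    [CompactSpace X] [MetricSpace Y] {h : X → Y} (hh : Continuous h) {E : Set Y}
    (hE : IsCompact E) {W : Set X} (hW : IsOpen W) (hEW : h ⁻¹' E ⊆ W) :
    ∃ δ > 0, h ⁻¹' thickening δ E ⊆ W := by
  have hclosed : IsClosed (h '' Wᶜ) := (hW.isClosed_compl.isCompact.image hh).isClosed
  have hE_avoids : E ⊆ (h '' Wᶜ)ᶜ := by
    rintro _ hy ⟨x, hxW, rfl⟩
    exact hxW (hEW hy)
  obtain ⟨δ, hδ, hδE⟩ := hE.exists_thickening_subset_open hclosed.isOpen_compl hE_avoids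
  exact ⟨δ, hδ, fun x hx => not_not.1 fun hxW => hδE hx ⟨x, hxW, rfl⟩⟩

theorem IsCompact.exists_isPreconnected_thickening_subset {X : Type*} [PseudoMetricSpace X]
    [LocallyConnectedSpace X] {E : Set X} (hE : IsCompact E) (hEc : IsConnected E) {δ : ℝ}
    (hδ : 0 < δ) :
    ∃ C, IsPreconnected C ∧ C ⊆ thickening δ E ∧ ∃ δ' > 0, thickening δ' E ⊆ C := by
  obtain ⟨e, he⟩ := hEc.nonempty
  set C := connectedComponentIn (thickening δ E) e
  have hEC : E ⊆ C :=
    hEc.isPreconnected.subset_connectedComponentIn he (self_subset_thickening hδ E)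
  obtain ⟨δ', hδ', hδ'C⟩ :=
    hE.exists_thickening_subset_open isOpen_thickening.connectedComponentIn hEC
  exact ⟨C, isPreconnected_connectedComponentIn, connectedComponentIn_subset _ _, δ', hδ', hδ'C⟩

theorem TendstoUniformly.isPreconnected_preimage {ι X Y : Type*} [TopologicalSpace X]
    [CompactSpace X] [T2Space X] [MetricSpace Y] [LocallyConnectedSpace Y] {p : Filter ι}
    [p.NeBot] {φ : ι → X ≃ₜ Y} {h : X → Y} (hconv : TendstoUniformly (fun i x => φ i x) h p)
    {E : Set Y} (hE : IsCompact E) (hEc : IsConnected E) : IsPreconnected (h ⁻¹' E) := by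
  have hcont : Continuous h := hconv.continuous (.of_forall fun i => (φ i).continuous)
  refine (hE.isClosed.preimage hcont).isPreconnected_of_forall_isOpen_superset fun W hW hEW => ?_
  obtain ⟨δ, hδ, hδW⟩ := hcont.exists_preimage_thickening_subset hE hW hEW
  obtain ⟨C, hC, hCδ, δ', hδ', hδ'C⟩ := hE.exists_isPreconnected_thickening_subset hEc (half_pos hδ)
  obtain ⟨i, hi⟩ := (Metric.tendstoUniformly_iff.1 hconv _ (lt_min hδ' (half_pos hδ))).exists
  refine ⟨φ i ⁻¹' C, (φ i).isPreconnected_preimage.2 hC, fun x hx => ?_, fun x hx => ?_⟩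
  · refine hδ'C (mem_thickening_iff.2 ⟨h x, hx, ?_⟩)
    exact dist_comm (h x) (φ i x) ▸ (hi x).trans_le (min_le_left _ _)
  · have hx' : h x ∈ thickening (δ / 2) (thickening (δ / 2) E) :=
      mem_thickening_iff.2 ⟨φ i x, hCδ hx, (hi x).trans_le (min_le_right _ _)⟩
    have := thickening_thickening_subset (δ / 2) (δ / 2) E hx'
    exact hδW (by rwa [add_halves] at this)

theorem uniform_limit_of_homeomorphisms_general (X : Type*) [MetricSpace X]
    [CompactSpace X] [LocallyConnectedSpace X]
    (φ : ℕ → X ≃ₜ X) (h : X → X)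
    (hconv : TendstoUniformly (fun n x => φ n x) h Filter.atTop) :
    Continuous h ∧ Function.Surjective h ∧
    ∀ E : Set X, IsClosed E → IsConnected E →
      IsClosed (h ⁻¹' E) ∧ IsConnected (h ⁻¹' E) := by
  have hcont : Continuous h := hconv.continuous (.of_forall fun n => (φ n).continuous)
  have hsurj : Surjective h := hconv.surjective (.of_forall fun n => (φ n).surjective) hcont
  refine ⟨hcont, hsurj, fun E hE hEc => ⟨hE.preimage hcont, hEc.nonempty.preimage hsurj, ?_⟩⟩
  exact hconv.isPreconnected_preimage hE.isCompact hEc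

theorem uniform_limit_of_homeomorphisms (X : Type*) [MetricSpace X]
    [CompactSpace X] [LocallyConnectedSpace X] [Nonempty X]
    (φ : ℕ → X ≃ₜ X) (h : X → X)
    (hconv : TendstoUniformly (fun n x => φ n x) h Filter.atTop) :
    Continuous h ∧ Function.Surjective h ∧
    ∀ E : Set X, IsClosed E → IsConnected E →
      IsClosed (h ⁻¹' E) ∧ IsConnected (h ⁻¹' E) :=
  uniform_limit_of_homeomorphisms_general X φ h hconv
end
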